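/- Let k ≥ 2, let ℒ be a volume-one metric structure on the wedge of k circles with volume entropy h_ℒ, and let f : (0,∞) → (0,∞) be a monotone non-increasing function with liminf_{x→∞} f(x)^{1/x} > e^{−h_ℒ}. Then C_f(ℒ) = Σ_{w ∈ 𝒞_k} f(ℓ_ℒ(w)) = ∞. -/

import Mathlib

/-!
Send each `g` in the `ℒ`-ball of radius `R` to the conjugacy class of `aᵢ^{±1} g aⱼ^{±1}`, where
`i ≠ j` and the signs are chosen so that nothing cancels. This word is cyclically reduced, so the
class has length at most `R + c` with `c = ℒ(aᵢ) + ℒ(aⱼ)`. Conjugate cyclically reduced words are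
cyclic rotations of each other, so at most `R/λ + 2` elements of the ball (`λ` the shortest edge)
land in the same class. The entropy hypothesis gives at least `e^{(h-δ)R}` elements in the ball,
and `f(x) ≥ θ^x` for some `θ > e^{-h}`; choosing `δ > 0` with `h - δ + log θ = δ`,
`C_f(ℒ) ≥ e^{(h-δ)R} / (R/λ + 2) · θ^{R+c} = θ^c e^{δR} / (R/λ + 2)`, which tends to infinity.
-/

open Filter Topology
open scoped ENNReal

namespace McShane

/-- The ℒ-weighted length of the freely reduced form of `g`: the sum of `L i`
over all occurrences of `aᵢ^{±1}` in the reduced word of `g`. -/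
noncomputable def wlen {k : ℕ} (L : Fin k → ℝ) (g : FreeGroup (Fin k)) : ℝ :=
  ((FreeGroup.toWord g).map fun x => L x.1).sum

/-- The hyperbolic length of a conjugacy class: the infimum of the ℒ-weighted
lengths of its representatives. For positive edge lengths this equals
`∑ mᵢ·L i` where `mᵢ` counts occurrences of `aᵢ^{±1}` in the cyclically reduced form. -/
noncomputable def hlen {k : ℕ} (L : Fin k → ℝ) (c : ConjClasses (FreeGroup (Fin k))) : ℝ :=
  sInf (wlen L '' c.carrier)

/-- The open simplex `Δ_k` of volume-one metric structures on the wedge of `k` circles. -/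
def simplex (k : ℕ) : Set (Fin k → ℝ) :=
  {L | (∀ i, 0 < L i) ∧ ∑ i, L i = 1}

/-- The barycentric point `ℒ* = (1/k, …, 1/k)`. -/
noncomputable def Lstar (k : ℕ) : Fin k → ℝ := fun _ => 1 / k

/-- `g` is primitive iff it belongs to some free basis of the free group,
equivalently it is the image of a basis element under an automorphism. -/
def IsPrimitive {k : ℕ} (g : FreeGroup (Fin k)) : Prop :=
  ∃ (e : FreeGroup (Fin k) ≃* FreeGroup (Fin k)) (i : Fin k), e (FreeGroup.of i) = g

/-- `C_f(ℒ) = ∑_{w ∈ 𝒞_k} f(ℓ_ℒ(w))`, the sum over all nontrivial conjugacy classes. -/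
noncomputable def Cf {k : ℕ} (f : ℝ → ℝ) (L : Fin k → ℝ) : ℝ≥0∞ :=
  ∑' c : {c : ConjClasses (FreeGroup (Fin k)) // c ≠ 1}, ENNReal.ofReal (f (hlen L c.1))

/-- `P_f(ℒ) = ∑_{w ∈ 𝒫_k} f(ℓ_ℒ(w))`, the sum over conjugacy classes of primitive elements. -/
noncomputable def Pf {k : ℕ} (f : ℝ → ℝ) (L : Fin k → ℝ) : ℝ≥0∞ :=
  ∑' c : {c : ConjClasses (FreeGroup (Fin k)) // ∃ g, IsPrimitive g ∧ ConjClasses.mk g = c},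
    ENNReal.ofReal (f (hlen L c.1))

end McShane

namespace FreeGroup

variable {α : Type*} {l m w z : List (α × Bool)}

theorem isCyclicallyReduced_iff_cycleChain :
    IsCyclicallyReduced l ↔
      Cycle.Chain (fun a b : α × Bool => a.1 = b.1 → a.2 = b.2) (l : Cycle (α × Bool)) := by
  cases l with
  | nil => simp
  | cons a t =>
    rw [Cycle.chain_coe_cons, ← List.cons_append, List.isChain_append]
    simp [IsCyclicallyReduced, IsReduced]

theorem IsCyclicallyReduced.of_isRotated (h : IsCyclicallyReduced l) (hl : l ~r m) :
    IsCyclicallyReduced m := by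
  rw [isCyclicallyReduced_iff_cycleChain, ← Cycle.coe_eq_coe.2 hl]
  exact isCyclicallyReduced_iff_cycleChain.1 h

theorem not_isCyclicallyReduced_append_invRev (hl : l ≠ []) (m : List (α × Bool)) :
    ¬ IsCyclicallyReduced (l ++ m ++ invRev l) := by
  obtain ⟨a, t, rfl⟩ := List.exists_cons_of_ne_nil hl
  intro h
  have hlast : (a :: t ++ m ++ invRev (a :: t)).getLast? = some (a.1, !a.2) := by
    rw [invRev_cons, ← List.append_assoc, List.getLast?_append_of_ne_nil _ (by simp [invRev])]
    simp [invRev]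
  have := h.2 _ hlast a (by simp)
  simp at this

theorem IsReduced.invRev (h : IsReduced l) : IsReduced (invRev l) := by
  classical
  have := isReduced_toWord (x := (mk l)⁻¹)
  rwa [toWord_inv, toWord_mk, h.reduce_eq] at this

theorem IsReduced.eq_of_mk_eq [DecidableEq α] (hl : IsReduced l) (hm : IsReduced m)
    (h : mk l = mk m) : l = m := by
  simpa [toWord_mk, hl.reduce_eq, hm.reduce_eq] using congrArg toWord h

theorem letter_rel_of_ne_inv {a b : α × Bool} (h : a ≠ (b.1, !b.2)) : a.1 = b.1 → a.2 = b.2 := by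
  obtain ⟨a₁, _ | _⟩ := a <;> obtain ⟨b₁, _ | _⟩ := b <;> simp_all

theorem IsCyclicallyReduced.conj_letter_cases (hw : IsCyclicallyReduced w) (x : α × Bool) :
    (∃ w', w ~r w' ∧ mk [x] * mk w * (mk [x])⁻¹ = mk w') ∨
      IsReduced (x :: w ++ invRev [x]) := by
  rcases w with _ | ⟨y, t⟩
  · exact Or.inl ⟨[], List.IsRotated.refl _, by rw [← one_eq_mk]; group⟩
  by_cases hhead : x = (y.1, !y.2)
  · refine Or.inl ⟨t ++ [y], List.IsRotated.cons_append_singleton, ?_⟩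
    have hxy : mk [x] = (mk [y])⁻¹ := by simp [inv_mk, invRev, hhead]
    have hyt : mk (y :: t) = mk [y] * mk t := (mul_mk (L₁ := [y])).symm
    rw [hxy, hyt, ← mul_mk]
    group
  by_cases hlast : x = (y :: t).getLast (List.cons_ne_nil y t)
  · obtain ⟨d, hd⟩ : ∃ d, y :: t = d ++ [x] :=
      ⟨_, hlast ▸ (List.dropLast_append_getLast (List.cons_ne_nil y t)).symm⟩
    refine Or.inl ⟨x :: d, hd ▸ List.isRotated_concat x d, ?_⟩
    have hxd : mk (x :: d) = mk [x] * mk d := (mul_mk (L₁ := [x])).symm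
    rw [hd, hxd, ← mul_mk]
    group
  right
  refine List.IsChain.append (List.isChain_cons.2 ⟨?_, hw.isReduced⟩) (List.isChain_singleton _) ?_
  · simpa using letter_rel_of_ne_inv hhead
  · rw [List.getLast?_cons_cons, List.getLast?_eq_some_getLast (List.cons_ne_nil y t)]
    simp only [invRev, List.map_cons, List.map_nil, List.reverse_singleton, List.head?_cons,
      Option.mem_def, Option.some.injEq, forall_eq']
    exact letter_rel_of_ne_inv (b := (x.1, !x.2)) (by simpa [eq_comm] using hlast)

/- Peel off the conjugator one letter at a time: a letter either cancels against an end of `w`,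
which rotates `w`, or survives at both ends of `z`, which is then not cyclically reduced. -/
theorem IsCyclicallyReduced.isRotated_of_mk_mul_mk_mul_inv [DecidableEq α] {l : List (α × Bool)}
    (hw : IsCyclicallyReduced w) (hz : IsCyclicallyReduced z) (hl : IsReduced l)
    (h : mk l * mk w * (mk l)⁻¹ = mk z) : w ~r z := by
  induction l using List.reverseRecOn generalizing w with
  | nil =>
    rw [← one_eq_mk, one_mul, inv_one, mul_one] at h
    exact (hw.isReduced.eq_of_mk_eq hz.isReduced h) ▸ List.IsRotated.refl w
  | append_singleton v x ih =>
    rcases hw.conj_letter_cases x with ⟨w', hww', hconj⟩ | hxw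
    · refine hww'.trans (ih (hw.of_isRotated hww') hl.left_of_append ?_)
      rw [← h, ← hconj, ← mul_mk]
      group
    · have hvx : IsReduced (v ++ [x] ++ (w ++ invRev [x])) := hl.append_overlap hxw (by simp)
      have hvx' : IsReduced (v ++ [x] ++ w ++ invRev (v ++ [x])) := by
        rw [invRev_append, ← List.append_assoc]
        refine IsReduced.append_overlap (by simpa using hvx) ?_ (by simp [invRev])
        rw [← invRev_append]
        exact hl.invRev
      have hzw : z = v ++ [x] ++ w ++ invRev (v ++ [x]) :=
        hz.isReduced.eq_of_mk_eq hvx' (by rw [← h, inv_mk, mul_mk, mul_mk])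
      exact absurd (hzw ▸ hz) (not_isCyclicallyReduced_append_invRev (by simp) w)

theorem IsCyclicallyReduced.isRotated_of_isConj [DecidableEq α] (hw : IsCyclicallyReduced w)
    (hz : IsCyclicallyReduced z) (h : IsConj (mk w) (mk z)) : w ~r z := by
  obtain ⟨u, hu⟩ := isConj_iff.1 h
  rw [← mk_toWord (x := u)] at hu
  exact hw.isRotated_of_mk_mul_mk_mul_inv hz isReduced_toWord hu

variable [DecidableEq α]

def compatibleLetter (i : α) (o : Option (α × Bool)) : α × Bool :=
  (i, decide (o ≠ some (i, false)))

theorem compatibleLetter_rel {i : α} {o : Option (α × Bool)} :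
    ∀ a ∈ o, a.1 = i → a.2 = (compatibleLetter i o).2 := by
  rintro ⟨a₁, _ | _⟩ rfl rfl <;> simp [compatibleLetter]

def framedWord (i j : α) (g : FreeGroup α) : List (α × Bool) :=
  compatibleLetter i g.toWord.head? :: g.toWord ++ [compatibleLetter j g.toWord.getLast?]

theorem length_framedWord (i j : α) (g : FreeGroup α) :
    (framedWord i j g).length = g.toWord.length + 2 := by
  simp [framedWord]

theorem framedWord_injective (i j : α) : Function.Injective (framedWord i j) := by
  intro g g' h
  have := congrArg (fun w => w.dropLast.tail) h
  simp only [framedWord, List.dropLast_concat, List.tail_cons] at this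
  exact toWord_injective this

theorem isCyclicallyReduced_framedWord {i j : α} (hij : i ≠ j) (g : FreeGroup α) :
    IsCyclicallyReduced (framedWord i j g) := by
  rw [framedWord, isCyclicallyReduced_cons_append_iff]
  refine ⟨List.IsChain.append (List.isChain_cons.2 ⟨?_, isReduced_toWord⟩)
    (List.isChain_singleton _) ?_, fun h => absurd h.symm hij⟩
  · intro a ha h
    exact (compatibleLetter_rel a ha h.symm).symm
  · rcases List.eq_nil_or_concat g.toWord with hg | ⟨v, b, hg⟩ <;> rw [hg]
    · simp [compatibleLetter, hij]
    · rw [List.concat_eq_append, ← List.cons_append, List.getLast?_concat]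
      simp only [List.head?_cons, Option.mem_def, Option.some.injEq, forall_eq']
      exact compatibleLetter_rel b (by simp)

theorem mk_framedWord_ne_one {i j : α} (hij : i ≠ j) (g : FreeGroup α) :
    mk (framedWord i j g) ≠ 1 := by
  rw [one_eq_mk]
  intro h
  have := (isCyclicallyReduced_framedWord hij g).isReduced.eq_of_mk_eq IsReduced.nil h
  simp [framedWord] at this

def framedClass {i j : α} (hij : i ≠ j) (g : FreeGroup α) :
    {c : ConjClasses (FreeGroup α) // c ≠ 1} :=
  ⟨ConjClasses.mk (mk (framedWord i j g)), by
    rw [ConjClasses.one_eq_mk_one, Ne, ConjClasses.mk_eq_mk_iff_isConj, isConj_one_left]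
    exact mk_framedWord_ne_one hij g⟩

open scoped Classical in
theorem card_le_mul_card_image_framedClass {i j : α} (hij : i ≠ j) (S : Finset (FreeGroup α))
    (n : ℕ) (hS : ∀ g ∈ S, g.toWord.length + 2 ≤ n) :
    S.card ≤ n * (S.image (framedClass hij)).card := by
  refine Finset.card_le_mul_card_image S n fun c hc => ?_
  obtain ⟨g₀, hg₀, rfl⟩ := Finset.mem_image.1 hc
  have hmaps : Set.MapsTo (framedWord i j) (S.filter (framedClass hij · = framedClass hij g₀))
      (framedWord i j g₀).cyclicPermutations.toFinset := by
    intro g hg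
    simp only [Finset.coe_filter, framedClass,
      Subtype.mk.injEq, ConjClasses.mk_eq_mk_iff_isConj] at hg
    simpa [List.mem_cyclicPermutations_iff] using
      ((isCyclicallyReduced_framedWord hij g₀).isRotated_of_isConj
        (isCyclicallyReduced_framedWord hij g) hg.2.symm).symm
  calc _ ≤ _ := Finset.card_le_card_of_injOn _ hmaps (framedWord_injective i j).injOn
    _ ≤ (framedWord i j g₀).cyclicPermutations.length := List.toFinset_card_le _
    _ ≤ n := by
      rw [List.length_cyclicPermutations_of_ne_nil _ (by simp [framedWord]), length_framedWord]
      exact hS g₀ hg₀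

end FreeGroup
namespace McShane

open FreeGroup

section WeightedLength

variable {k : ℕ} {L : Fin k → ℝ} {m : ℝ}

theorem length_mul_le_wlen (hm : ∀ i, m ≤ L i) (g : FreeGroup (Fin k)) :
    g.toWord.length * m ≤ wlen L g := by
  simpa [wlen] using List.card_nsmul_le_sum (g.toWord.map fun x => L x.1) m (by simp [hm])

theorem wlen_nonneg (hL : ∀ i, 0 ≤ L i) (g : FreeGroup (Fin k)) : 0 ≤ wlen L g :=
  List.sum_nonneg (by simpa using fun a _ => hL a)

theorem wlen_mk_framedWord {i j : Fin k} (hij : i ≠ j) (g : FreeGroup (Fin k)) :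
    wlen L (mk (framedWord i j g)) = L i + wlen L g + L j := by
  rw [wlen, toWord_mk, (isCyclicallyReduced_framedWord hij g).isReduced.reduce_eq]
  simp [framedWord, wlen, compatibleLetter]
  ring

theorem length_le_floor_of_wlen_le (hm0 : 0 < m) (hm : ∀ i, m ≤ L i) {g : FreeGroup (Fin k)}
    {R : ℝ} (hg : wlen L g ≤ R) : g.toWord.length ≤ ⌊R / m⌋₊ :=
  Nat.le_floor ((le_div_iff₀ hm0).2 ((length_mul_le_wlen hm g).trans hg))

theorem finite_setOf_wlen_le (hm0 : 0 < m) (hm : ∀ i, m ≤ L i) (R : ℝ) :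
    {g : FreeGroup (Fin k) | wlen L g ≤ R}.Finite :=
  ((List.finite_length_le _ ⌊R / m⌋₊).preimage toWord_injective.injOn).subset
    fun _ hg => length_le_floor_of_wlen_le hm0 hm hg

theorem card_wlen_le_pos (hm0 : 0 < m) (hm : ∀ i, m ≤ L i) {R : ℝ} (hR : 0 ≤ R) :
    0 < Nat.card {g : FreeGroup (Fin k) // wlen L g ≤ R} :=
  have := (finite_setOf_wlen_le hm0 hm R).to_subtype
  Nat.card_pos_iff.2 ⟨⟨⟨1, by simpa [wlen] using hR⟩⟩, this⟩

theorem hlen_le_wlen (hL : ∀ i, 0 ≤ L i) {c : ConjClasses (FreeGroup (Fin k))}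
    {g : FreeGroup (Fin k)} (hg : g ∈ c.carrier) : hlen L c ≤ wlen L g :=
  csInf_le ⟨0, by rintro _ ⟨x, -, rfl⟩; exact wlen_nonneg hL x⟩ ⟨g, hg, rfl⟩

theorem le_hlen (hm0 : 0 ≤ m) (hm : ∀ i, m ≤ L i) {c : ConjClasses (FreeGroup (Fin k))}
    (hc : c ≠ 1) : m ≤ hlen L c := by
  obtain ⟨g, rfl⟩ := ConjClasses.mk_surjective c
  refine le_csInf ⟨_, g, ConjClasses.mem_carrier_mk, rfl⟩ ?_
  rintro _ ⟨x, hx, rfl⟩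
  have hx1 : x ≠ 1 := by
    rintro rfl
    exact hc (by rw [ConjClasses.one_eq_mk_one, ← ConjClasses.mem_carrier_iff_mk_eq.1 hx])
  have hlen : 1 ≤ x.toWord.length :=
    List.length_pos_iff.2 (mt toWord_eq_nil_iff.1 hx1)
  calc m ≤ x.toWord.length * m := le_mul_of_one_le_left hm0 (by exact_mod_cast hlen)
    _ ≤ wlen L x := length_mul_le_wlen hm x

open scoped Classical in
theorem exists_card_wlen_le_le_mul_card (hm0 : 0 < m) (hm : ∀ i, m ≤ L i) {i j : Fin k}
    (hij : i ≠ j) {R : ℝ} (hR : 0 ≤ R) :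
    ∃ T : Finset {c : ConjClasses (FreeGroup (Fin k)) // c ≠ 1},
      (Nat.card {g : FreeGroup (Fin k) // wlen L g ≤ R} : ℝ) ≤ (R / m + 2) * T.card ∧
        ∀ c ∈ T, hlen L c ≤ R + (L i + L j) := by
  set S := (finite_setOf_wlen_le hm0 hm R).toFinset
  have hS : ∀ g ∈ S, wlen L g ≤ R := fun g hg => by simpa [S] using hg
  refine ⟨S.image (framedClass hij), ?_, ?_⟩
  · have hcount := card_le_mul_card_image_framedClass hij S (⌊R / m⌋₊ + 2)
      fun g hg => by have := length_le_floor_of_wlen_le hm0 hm (hS g hg); omega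
    have hNS : Nat.card {g : FreeGroup (Fin k) // wlen L g ≤ R} = S.card :=
      Nat.card_eq_card_finite_toFinset (finite_setOf_wlen_le hm0 hm R)
    rw [hNS]
    calc (S.card : ℝ) ≤ (⌊R / m⌋₊ + 2 : ℕ) * (S.image (framedClass hij)).card := by
          exact_mod_cast hcount
      _ ≤ (R / m + 2) * (S.image (framedClass hij)).card := by
          gcongr
          push_cast
          gcongr
          exact Nat.floor_le (by positivity)
  · intro c hc
    obtain ⟨g, hg, rfl⟩ := Finset.mem_image.1 hc
    calc hlen L (framedClass hij g) ≤ wlen L (mk (framedWord i j g)) :=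
          hlen_le_wlen (fun i => hm0.le.trans (hm i)) ConjClasses.mem_carrier_mk
      _ ≤ R + (L i + L j) := by rw [wlen_mk_framedWord hij]; linarith [hS g hg]

theorem ofReal_card_mul_le_Cf (hm0 : 0 < m) (hm : ∀ i, m ≤ L i) {f : ℝ → ℝ}
    (hf_anti : AntitoneOn f (Set.Ioi 0))
    (T : Finset {c : ConjClasses (FreeGroup (Fin k)) // c ≠ 1}) {x : ℝ}
    (hT : ∀ c ∈ T, hlen L c ≤ x) : ENNReal.ofReal (T.card * f x) ≤ Cf f L := by
  have hpos : ∀ c ∈ T, 0 < hlen L c := fun c _ => hm0.trans_le (le_hlen hm0.le hm c.2)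
  calc ENNReal.ofReal (T.card * f x) = ∑ _c ∈ T, ENNReal.ofReal (f x) := by
        rw [ENNReal.ofReal_mul (Nat.cast_nonneg _), ENNReal.ofReal_natCast, Finset.sum_const,
          nsmul_eq_mul]
    _ ≤ ∑ c ∈ T, ENNReal.ofReal (f (hlen L c)) := Finset.sum_le_sum fun c hc =>
        ENNReal.ofReal_le_ofReal
          (hf_anti (hpos c hc) ((hpos c hc).trans_le (hT c hc)) (hT c hc))
    _ ≤ Cf f L := ENNReal.sum_le_tsum T

theorem ofReal_card_wlen_le_mul_le_Cf (hm0 : 0 < m) (hm : ∀ i, m ≤ L i) {i j : Fin k}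
    (hij : i ≠ j) {f : ℝ → ℝ} (hf_anti : AntitoneOn f (Set.Ioi 0)) {R : ℝ} (hR : 0 ≤ R) :
    ENNReal.ofReal (Nat.card {g : FreeGroup (Fin k) // wlen L g ≤ R} / (R / m + 2) *
      f (R + (L i + L j))) ≤ Cf f L := by
  obtain ⟨T, hcard, hT⟩ := exists_card_wlen_le_le_mul_card hm0 hm hij (L := L) hR
  refine le_trans ?_ (ofReal_card_mul_le_Cf hm0 hm hf_anti T hT)
  rcases le_or_gt 0 (f (R + (L i + L j))) with hf | hf
  · gcongr
    rwa [div_le_iff₀ (by positivity), mul_comm]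
  · rw [ENNReal.ofReal_of_nonpos (mul_nonpos_of_nonneg_of_nonpos (by positivity) hf.le)]
    exact zero_le

end WeightedLength

theorem eventually_exp_mul_le_of_tendsto_log_div {u : ℝ → ℝ} {a b : ℝ}
    (hu : ∀ᶠ R in atTop, 0 < u R) (hlim : Tendsto (fun R => Real.log (u R) / R) atTop (𝓝 a))
    (hb : b < a) : ∀ᶠ R in atTop, Real.exp (b * R) ≤ u R := by
  filter_upwards [hu, hlim.eventually (eventually_ge_nhds hb), eventually_gt_atTop 0]
    with R huR hbR hR
  rw [← Real.le_log_iff_exp_le huR, ← le_div_iff₀ hR]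
  exact hbR

theorem eventually_rpow_le_of_lt_liminf {f : ℝ → ℝ} {θ : ℝ} (hθ : 0 < θ)
    (hf : ∀ᶠ x in atTop, 0 ≤ f x) (h : θ < liminf (fun x => f x ^ (1 / x)) atTop) :
    ∀ᶠ x in atTop, θ ^ x ≤ f x := by
  have hbdd : IsBoundedUnder (· ≥ ·) atTop (fun x => f x ^ (1 / x)) :=
    isBoundedUnder_of_eventually_ge (hf.mono fun x hx => Real.rpow_nonneg hx _)
  filter_upwards [eventually_lt_of_lt_liminf h hbdd, hf, eventually_gt_atTop 0]
    with x hθx hfx hx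
  calc θ ^ x ≤ (f x ^ (1 / x)) ^ x := Real.rpow_le_rpow hθ.le hθx.le hx.le
    _ = f x := by rw [← Real.rpow_mul hfx, one_div_mul_cancel hx.ne', Real.rpow_one]

theorem tendsto_exp_mul_div_add_atTop {δ a b : ℝ} (hδ : 0 < δ) (ha : 0 < a) (hb : 0 ≤ b) :
    Tendsto (fun R => Real.exp (δ * R) / (R / a + b)) atTop atTop := by
  refine tendsto_atTop_mono' _ ?_
    ((tendsto_exp_mul_div_rpow_atTop 1 δ hδ).atTop_div_const (by positivity : 0 < a⁻¹ + b))
  filter_upwards [eventually_ge_atTop 1] with R hR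
  rw [Real.rpow_one, div_div]
  gcongr
  rw [mul_add, div_eq_mul_inv, mul_comm]
  nlinarith

theorem tendsto_div_add_mul_atTop {u f : ℝ → ℝ} {h θ a b c : ℝ}
    (hu : ∀ᶠ R in atTop, 0 < u R) (hent : Tendsto (fun R => Real.log (u R) / R) atTop (𝓝 h))
    (hθ : Real.exp (-h) < θ) (hf : ∀ᶠ x in atTop, θ ^ x ≤ f x) (ha : 0 < a) (hb : 0 ≤ b) :
    Tendsto (fun R => u R / (R / a + b) * f (R + c)) atTop atTop := by
  have hθ0 : 0 < θ := (Real.exp_pos _).trans hθ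
  have hlogθ : -h < Real.log θ := (Real.lt_log_iff_exp_lt hθ0).2 hθ
  obtain ⟨δ, hδ, hδθ⟩ : ∃ δ, 0 < δ ∧ h - δ + Real.log θ = δ :=
    ⟨(h + Real.log θ) / 2, by linarith, by ring⟩
  refine tendsto_atTop_mono' _ ?_ ((tendsto_exp_mul_div_add_atTop hδ ha hb).const_mul_atTop
    (Real.rpow_pos_of_pos hθ0 c))
  filter_upwards [eventually_exp_mul_le_of_tendsto_log_div hu hent (by linarith : h - δ < h),
    (tendsto_atTop_add_const_right _ c tendsto_id).eventually hf, eventually_ge_atTop 0]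
    with R huR hfR hR
  have hexp : Real.exp ((h - δ) * R) * θ ^ R = Real.exp (δ * R) := by
    rw [Real.rpow_def_of_pos hθ0, ← Real.exp_add]
    congr 1
    linear_combination R * hδθ
  calc θ ^ c * (Real.exp (δ * R) / (R / a + b))
      = Real.exp ((h - δ) * R) * θ ^ (R + c) / (R / a + b) := by
        rw [Real.rpow_add hθ0 R c, ← hexp]
        ring
    _ ≤ u R * f (R + c) / (R / a + b) :=
        div_le_div_of_nonneg_right
          (mul_le_mul huR hfR (by positivity) ((Real.exp_pos _).le.trans huR)) (by positivity)
    _ = u R / (R / a + b) * f (R + c) := by ring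

/-- If `L ∈ Δ_k` has volume entropy `h` and `f` is positive, non-increasing with
`liminf_{x→∞} f(x)^{1/x} > e^{−h}`, then `C_f(L) = ∞`. -/
theorem mcshane_stmt10 (k : ℕ) (hk : 2 ≤ k) (L : Fin k → ℝ) (hL : L ∈ simplex k)
    (h : ℝ)
    (hent : Tendsto (fun R : ℝ =>
        Real.log (Nat.card {g : FreeGroup (Fin k) // wlen L g ≤ R}) / R) atTop (𝓝 h))
    (f : ℝ → ℝ)
    (hf_pos : ∀ x > (0:ℝ), 0 < f x)
    (hf_anti : AntitoneOn f (Set.Ioi 0))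
    (hf_liminf : Real.exp (-h) < liminf (fun x : ℝ => f x ^ (1 / x)) atTop) :
    Cf f L = ⊤ := by
  obtain ⟨i, j, hij⟩ := (Fin.nontrivial_iff_two_le.2 hk).exists_pair_ne
  have : Nonempty (Fin k) := ⟨i⟩
  obtain ⟨i₀, hm⟩ := Finite.exists_min L
  have hm0 : 0 < L i₀ := hL.1 i₀
  obtain ⟨θ, hθh, hθf⟩ := exists_between hf_liminf
  have hf : ∀ᶠ x in atTop, θ ^ x ≤ f x := eventually_rpow_le_of_lt_liminf
    ((Real.exp_pos _).trans hθh) ((eventually_gt_atTop 0).mono fun x hx => (hf_pos x hx).le) hθf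
  have hN : ∀ᶠ R in atTop, 0 < (Nat.card {g : FreeGroup (Fin k) // wlen L g ≤ R} : ℝ) :=
    (eventually_ge_atTop 0).mono fun R hR => Nat.cast_pos.2 (card_wlen_le_pos hm0 hm hR)
  refine top_unique (le_of_tendsto (ENNReal.tendsto_ofReal_atTop.comp
    (tendsto_div_add_mul_atTop (c := L i + L j) hN hent hθh hf hm0 zero_le_two)) ?_)
  filter_upwards [eventually_ge_atTop 0] with R hR
    using ofReal_card_wlen_le_mul_le_Cf hm0 hm hij hf_anti hR

end McShane
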